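/- arXiv:1401.3390 — 2 statements merged into one kernel-verified Lean document; each statement's English description precedes it below -/
import Mathlib

section
/- For every ε > 0, the probability that the maximum calibration error exceeds ε satisfies P(MCE ≥ ε) ≤ 2B·exp(−Nε²/(2B)) (equivalently, since N = nB, P(MCE ≥ ε) ≤ 2B·exp(−nε²/2)). -/
open MeasureTheory ProbabilityTheory Finset

/-- Empirical estimate of input bin `t`: the average of the `n` samples in that bin. -/
noncomputable def binEst {Ω : Type*} {B n : ℕ} (X : Fin B × Fin n → Ω → ℝ)
    (t : Fin B) (ω : Ω) : ℝ :=
  (n : ℝ)⁻¹ * ∑ s : Fin n, X (t, s) ω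

/-- Weighted average of the values `v t` over the input bins mapped to output bin `j`. -/
noncomputable def binAvg {B J : ℕ} (g : Fin B → Fin J) (α : Fin B → ℝ)
    (v : Fin B → ℝ) (j : Fin J) : ℝ :=
  (∑ t ∈ univ.filter (fun t => g t = j), α t * v t) /
    (∑ t ∈ univ.filter (fun t => g t = j), α t)

/-- Maximum calibration error: the largest deviation, over output bins `j`, between the
weighted average `o_j` of the true bin values and the weighted average `e_j` of the
empirical bin estimates. -/
noncomputable def MCE {Ω : Type*} {B n J : ℕ} (g : Fin B → Fin J) (α θ : Fin B → ℝ)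
    (X : Fin B × Fin n → Ω → ℝ) (ω : Ω) : ℝ :=
  ⨆ j : Fin J, |binAvg g α θ j - binAvg g α (fun t => binEst X t ω) j|

open Real
open scoped NNReal

/-
Each input-bin estimate is the mean of `n` independent `[0,1]`-valued samples, so by Hoeffding's
inequality it deviates from `θ_t` by at least `ε` with probability at most `2 exp(-2nε²)`. An output
bin compares weighted averages of the `θ_t` and of their estimates, so its error is at most the
largest input-bin deviation. A union bound over the `B` input bins then gives the claim, with room
to spare since `exp(-2nε²) ≤ exp(-nε²/2)`.
-/

lemma ProbabilityTheory.HasSubgaussianMGF.measureReal_abs_ge_le {Ω : Type*} [MeasurableSpace Ω]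
    {μ : Measure Ω} [IsFiniteMeasure μ] {X : Ω → ℝ} {c : ℝ≥0} (h : HasSubgaussianMGF X c μ)
    {ε : ℝ} (hε : 0 ≤ ε) :
    μ.real {ω | ε ≤ |X ω|} ≤ 2 * exp (-ε ^ 2 / (2 * c)) := by
  have hsplit : {ω | ε ≤ |X ω|} = {ω | ε ≤ X ω} ∪ {ω | ε ≤ (-X) ω} := by
    ext ω
    simp only [Set.mem_ofPred_eq, Set.mem_union, Pi.neg_apply, le_abs', le_neg, or_comm]
  calc μ.real {ω | ε ≤ |X ω|} ≤ μ.real {ω | ε ≤ X ω} + μ.real {ω | ε ≤ (-X) ω} := by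
        rw [hsplit]
        exact measureReal_union_le _ _
    _ ≤ exp (-ε ^ 2 / (2 * c)) + exp (-ε ^ 2 / (2 * c)) :=
        add_le_add (h.measure_ge_le hε) (h.neg.measure_ge_le hε)
    _ = 2 * exp (-ε ^ 2 / (2 * c)) := by ring

lemma measureReal_abs_sub_sampleMean_ge_le {Ω : Type*} [MeasurableSpace Ω] {μ : Measure Ω}
    [IsProbabilityMeasure μ] {n : ℕ} (hn : 0 < n) {Y : Fin n → Ω → ℝ}
    (hY : ∀ s ω, Y s ω ∈ Set.Icc (0 : ℝ) 1) (hmeas : ∀ s, Measurable (Y s))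
    (hindep : iIndepFun Y μ) {θ : ℝ} (hmean : ∀ s, μ[Y s] = θ) {ε : ℝ} (hε : 0 ≤ ε) :
    μ.real {ω | ε ≤ |θ - (n : ℝ)⁻¹ * ∑ s, Y s ω|} ≤ 2 * exp (-2 * n * ε ^ 2) := by
  have hn' : (0 : ℝ) < n := Nat.cast_pos.2 hn
  have hsubG : ∀ s, HasSubgaussianMGF (fun ω ↦ Y s ω - θ) (1 / 4) μ := by
    intro s
    rw [← hmean s]
    convert hasSubgaussianMGF_of_mem_Icc (μ := μ) (hmeas s).aemeasurable
      (ae_of_all _ (hY s)) using 2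
    norm_num
  have hindep' : iIndepFun (fun s ω ↦ Y s ω - θ) μ :=
    hindep.comp (fun _ x ↦ x - θ) fun _ ↦ measurable_id.sub_const θ
  have hsum := (HasSubgaussianMGF.sum_of_iIndepFun hindep' (s := univ) fun s _ ↦
    hsubG s).measureReal_abs_ge_le (mul_nonneg hn'.le hε)
  have hevent : {ω | ε ≤ |θ - (n : ℝ)⁻¹ * ∑ s, Y s ω|}
      = {ω | n * ε ≤ |∑ s, (Y s ω - θ)|} := by
    ext ω
    have hscale : |∑ s, (Y s ω - θ)| = n * |θ - (n : ℝ)⁻¹ * ∑ s, Y s ω| := by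
      have hsum_eq : ∑ s, (Y s ω - θ) = -(n * (θ - (n : ℝ)⁻¹ * ∑ s, Y s ω)) := by
        simp only [sum_sub_distrib, sum_const, card_univ, Fintype.card_fin, nsmul_eq_mul]
        field_simp
        ring
      rw [hsum_eq, abs_neg, abs_mul, abs_of_pos hn']
    simp only [Set.mem_ofPred_eq, hscale, mul_le_mul_iff_right₀ hn']
  have hexponent : -(n * ε) ^ 2 / (2 * ((∑ _s : Fin n, 1 / 4 : ℝ≥0) : ℝ)) = -2 * n * ε ^ 2 := by
    simp only [sum_const, card_univ, Fintype.card_fin, nsmul_eq_mul]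
    push_cast
    field_simp
    ring
  rw [hevent]
  simpa only [hexponent] using hsum

lemma abs_binAvg_sub_binAvg_le {B J : ℕ} {g : Fin B → Fin J} {α u v : Fin B → ℝ} {j : Fin J}
    {δ : ℝ} (hα : ∀ t, 0 ≤ α t) (hδ : 0 ≤ δ) (huv : ∀ t, g t = j → |u t - v t| ≤ δ) :
    |binAvg g α u j - binAvg g α v j| ≤ δ := by
  set F := univ.filter fun t => g t = j
  have hW : 0 ≤ ∑ t ∈ F, α t := sum_nonneg fun t _ => hα t
  rw [binAvg, binAvg, div_sub_div_same, ← sum_sub_distrib, abs_div, abs_of_nonneg hW]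
  -- `div_le_of_le_mul₀` also covers a fiber of total weight `0`, where both averages are `0`
  refine div_le_of_le_mul₀ hW hδ ?_
  calc |∑ t ∈ F, (α t * u t - α t * v t)| ≤ ∑ t ∈ F, |α t * u t - α t * v t| :=
        abs_sum_le_sum_abs _ _
    _ = ∑ t ∈ F, α t * |u t - v t| :=
        sum_congr rfl fun t _ => by rw [← mul_sub, abs_mul, abs_of_nonneg (hα t)]
    _ ≤ ∑ t ∈ F, α t * δ :=
        sum_le_sum fun t ht => mul_le_mul_of_nonneg_left (huv t (mem_filter.1 ht).2) (hα t)
    _ = δ * ∑ t ∈ F, α t := by rw [← sum_mul, mul_comm]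

lemma MCE_le_iSup_abs_sub_binEst {Ω : Type*} {B n J : ℕ} {g : Fin B → Fin J}
    {α θ : Fin B → ℝ} (hα : ∀ t, 0 ≤ α t) (X : Fin B × Fin n → Ω → ℝ) (ω : Ω) :
    MCE g α θ X ω ≤ ⨆ t, |θ t - binEst X t ω| := by
  have hδ : 0 ≤ ⨆ t, |θ t - binEst X t ω| := Real.iSup_nonneg fun t => abs_nonneg _
  exact Real.iSup_le (fun j => abs_binAvg_sub_binAvg_le hα hδ fun t _ =>
    le_ciSup (f := fun t => |θ t - binEst X t ω|) (Finite.bddAbove_range _) t) hδ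

theorem mce_tail_bound_general
    {Ω : Type*} [MeasurableSpace Ω] (μ : Measure Ω) [IsProbabilityMeasure μ]
    (B n : ℕ) (hB : 1 ≤ B) (hn : 1 ≤ n)
    (θ : Fin B → ℝ)
    (X : Fin B × Fin n → Ω → ℝ)
    (hX01 : ∀ p ω, X p ω = 0 ∨ X p ω = 1)
    (hXmeas : ∀ p, Measurable (X p))
    (hindep : iIndepFun X μ)
    (hmean : ∀ t s, ∫ ω, X (t, s) ω ∂μ = θ t)
    (J : ℕ) (g : Fin B → Fin J)
    (α : Fin B → ℝ) (hα : ∀ t, 0 < α t)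
    (ε : ℝ) (hε : 0 < ε) :
    μ {ω | ε ≤ MCE g α θ X ω}
      ≤ ENNReal.ofReal (2 * B * Real.exp (-((n * B : ℝ) * ε ^ 2) / (2 * B))) := by
  have : Nonempty (Fin B) := ⟨⟨0, hB⟩⟩
  have hbin : ∀ t, μ.real {ω | ε ≤ |θ t - binEst X t ω|} ≤ 2 * exp (-2 * n * ε ^ 2) := fun t =>
    measureReal_abs_sub_sampleMean_ge_le hn
      (fun s ω => by rcases hX01 (t, s) ω with h | h <;> simp [h]) (fun s => hXmeas (t, s))
      (hindep.precomp (Prod.mk_right_injective t)) (hmean t) hε.le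
  have hsub : {ω | ε ≤ MCE g α θ X ω} ⊆ ⋃ t, {ω | ε ≤ |θ t - binEst X t ω|} := by
    intro ω hω
    obtain ⟨t, ht⟩ := exists_eq_ciSup_of_finite (f := fun t => |θ t - binEst X t ω|)
    exact Set.mem_iUnion.2
      ⟨t, hω.trans ((MCE_le_iSup_abs_sub_binEst (fun t => (hα t).le) X ω).trans ht.ge)⟩
  have hexponent : -((n * B : ℝ) * ε ^ 2) / (2 * B) = -(n * ε ^ 2) / 2 := by
    field_simp
  rw [← ofReal_measureReal, hexponent]
  refine ENNReal.ofReal_le_ofReal ?_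
  calc μ.real {ω | ε ≤ MCE g α θ X ω} ≤ ∑ t, μ.real {ω | ε ≤ |θ t - binEst X t ω|} :=
        (measureReal_mono hsub).trans (measureReal_iUnion_fintype_le _)
    _ ≤ ∑ _t : Fin B, 2 * exp (-2 * n * ε ^ 2) := sum_le_sum fun t _ => hbin t
    _ ≤ 2 * B * exp (-(n * ε ^ 2) / 2) := by
        rw [sum_const, card_univ, Fintype.card_fin, nsmul_eq_mul, ← mul_assoc, mul_comm (B : ℝ)]
        gcongr
        linarith [mul_nonneg (Nat.cast_nonneg n : (0 : ℝ) ≤ n) (sq_nonneg ε)]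

/-- **MCE tail bound**: for every `ε > 0`,
`P(MCE ≥ ε) ≤ 2B · exp(−Nε²/(2B)) = 2B · exp(−nε²/2)` (with `N = nB`). -/
theorem mce_tail_bound
    {Ω : Type*} [MeasurableSpace Ω] (μ : Measure Ω) [IsProbabilityMeasure μ]
    (B n : ℕ) (hB : 1 ≤ B) (hn : 1 ≤ n)
    (θ : Fin B → ℝ) (hθ : ∀ t, θ t ∈ Set.Icc (0 : ℝ) 1)
    (X : Fin B × Fin n → Ω → ℝ)
    (hX01 : ∀ p ω, X p ω = 0 ∨ X p ω = 1)
    (hXmeas : ∀ p, Measurable (X p))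
    (hindep : iIndepFun X μ)
    (hmean : ∀ t s, ∫ ω, X (t, s) ω ∂μ = θ t)
    (J : ℕ) (g : Fin B → Fin J) (hg : Function.Surjective g)
    (α : Fin B → ℝ) (hα : ∀ t, 0 < α t)
    (ε : ℝ) (hε : 0 < ε) :
    μ {ω | ε ≤ MCE g α θ X ω}
      ≤ ENNReal.ofReal (2 * B * Real.exp (-((n * B : ℝ) * ε ^ 2) / (2 * B))) :=
  mce_tail_bound_general μ B n hB hn θ X hX01 hXmeas hindep hmean J g α hα ε hε
end

section
/- Let B ≥ 1, let θ_1,…,θ_B ∈ [0,1] be pairwise distinct with S⁺ = ∑_{K=1}^B θ_K > 0 and S⁻ = ∑_{K=1}^B (1−θ_K) > 0, and let u_1,…,u_B ∈ [0,1]. Define AUC_base = ( ∑_{(K,L): K > L} θ_K(1−θ_L) + ∑_{K=1}^B u_K·θ_K(1−θ_K) ) / (S⁺·S⁻) and AUC_cal = ( ∑_{(K,L): θ_K > θ_L} θ_K(1−θ_L) + (1/2)·∑_{K=1}^B θ_K(1−θ_K) ) / (S⁺·S⁻). Then AUC_base − AUC_cal ≤ 1/(2B); in particular, in the large-sample limit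 the worst-case AUC loss of histogram-binning calibration is at most 1/(2B) = O(1/B). -/
/-!
Cross-bin pairs cost nothing: for bins `K > L` the calibrated classifier ranks the pair by `θ`,
and `θ_K (1 - θ_L) - θ_L (1 - θ_K) = θ_K - θ_L`, so it always scores the larger of the two
orientations. Only within-bin pairs can lose, at most `θ_K (1 - θ_K) / 2` each, and
`B ∑ θ_K (1 - θ_K) ≤ S⁺ S⁻` is Cauchy–Schwarz `(∑ θ_K)² ≤ B ∑ θ_K²`.
-/

open Finset

theorem Finset.sum_sum_eq_sum_sum_lt_add_swap {ι M : Type*} [Fintype ι] [LinearOrder ι]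
    [AddCommMonoid M] (g : ι → ι → M) (hg : ∀ i, g i i = 0) :
    ∑ i, ∑ j, g i j = ∑ i, ∑ j ∈ univ.filter (· < i), (g i j + g j i) := by
  have hsplit : ∀ i j, g i j = (if j < i then g i j else 0) + if i < j then g i j else 0 := by
    intro i j
    rcases lt_trichotomy i j with h | rfl | h
    · simp [h, h.not_gt]
    · simp [hg]
    · simp [h, h.not_gt]
  simp_rw [sum_add_distrib, sum_filter]
  conv_lhs => enter [2, i, 2, j]; rw [hsplit i j]
  simp only [sum_add_distrib]
  rw [sum_comm (f := fun i j => if i < j then g i j else 0)]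

theorem card_mul_sum_mul_one_sub_le {ι : Type*} (s : Finset ι) (f : ι → ℝ) :
    (#s : ℝ) * ∑ i ∈ s, f i * (1 - f i) ≤ (∑ i ∈ s, f i) * ∑ i ∈ s, (1 - f i) := by
  have := sq_sum_le_card_mul_sum_sq (s := s) (f := f)
  simp only [mul_one_sub, sum_sub_distrib, sum_const, nsmul_eq_mul, mul_one, ← sq]
  nlinarith

theorem mul_one_sub_le_ite_add_ite {a b : ℝ} (hab : a ≠ b) :
    a * (1 - b) ≤ (if a > b then a * (1 - b) else 0) + if b > a then b * (1 - a) else 0 := by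
  rcases hab.lt_or_gt with h | h
  · simp only [gt_iff_lt, h.not_gt, h, if_true, if_false, zero_add]
    linarith
  · simp [h, h.not_gt]

theorem sum_sum_lt_mul_one_sub_le {ι : Type*} [Fintype ι] [LinearOrder ι] {θ : ι → ℝ}
    (hθ : Function.Injective θ) :
    ∑ i, ∑ j ∈ univ.filter (· < i), θ i * (1 - θ j)
      ≤ ∑ i, ∑ j, if θ i > θ j then θ i * (1 - θ j) else 0 := by
  rw [sum_sum_eq_sum_sum_lt_add_swap _ (fun i => by simp)]
  gcongr with i _ j hj
  exact mul_one_sub_le_ite_add_ite (hθ.ne (mem_filter.mp hj).2.ne')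

/-- **Population AUC loss of histogram binning**: with `B` equal-frequency bins, pairwise
distinct bin positive-fractions `θ_K ∈ [0,1]`, within-bin ranking accuracies `u_K ∈ [0,1]`,
`S⁺ = ∑ θ_K > 0` and `S⁻ = ∑ (1−θ_K) > 0`, the AUC of the base classifier minus the AUC of
the calibrated classifier is at most `1/(2B)`. -/
theorem auc_loss_le (B : ℕ) (hB : 1 ≤ B)
    (θ : Fin B → ℝ) (hθ : ∀ K, θ K ∈ Set.Icc (0 : ℝ) 1)
    (hdist : Function.Injective θ)
    (hpos : 0 < ∑ K : Fin B, θ K) (hneg : 0 < ∑ K : Fin B, (1 - θ K))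
    (u : Fin B → ℝ) (hu : ∀ K, u K ∈ Set.Icc (0 : ℝ) 1) :
    ((∑ K : Fin B, ∑ L ∈ univ.filter (fun L => L < K), θ K * (1 - θ L))
        + ∑ K : Fin B, u K * (θ K * (1 - θ K))) /
      ((∑ K : Fin B, θ K) * (∑ K : Fin B, (1 - θ K)))
    - ((∑ K : Fin B, ∑ L : Fin B, (if θ K > θ L then θ K * (1 - θ L) else 0))
        + (1 / 2) * ∑ K : Fin B, θ K * (1 - θ K)) /
      ((∑ K : Fin B, θ K) * (∑ K : Fin B, (1 - θ K)))
    ≤ 1 / (2 * B) := by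
  have hD : 0 < (∑ K : Fin B, θ K) * ∑ K : Fin B, (1 - θ K) := mul_pos hpos hneg
  have hB0 : (0 : ℝ) < 2 * B := by positivity
  have hcross := sum_sum_lt_mul_one_sub_le hdist
  have hwithin : ∑ K : Fin B, u K * (θ K * (1 - θ K)) ≤ ∑ K : Fin B, θ K * (1 - θ K) :=
    sum_le_sum fun K _ => mul_le_of_le_one_left
      (mul_nonneg (hθ K).1 (sub_nonneg.mpr (hθ K).2)) (hu K).2
  have hCS := card_mul_sum_mul_one_sub_le univ θ
  rw [card_univ, Fintype.card_fin] at hCS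
  rw [div_sub_div_same, div_le_div_iff₀ hD hB0, one_mul]
  nlinarith
end
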